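/- Let (x, y) be drawn from the centered bivariate Gaussian distribution on ℝ² with covariance matrix having entries Var(x) = σ_x², Cov(x,y) = σ_{xy}, Var(y) = σ_y² > 0. Then for nonnegative integers k, ℓ: if k ≥ ℓ and k − ℓ is even, E[ h_k(x) · h_ℓ(y/σ_y) ] = √(k!/ℓ!) · ( 1 / ( ((k−ℓ)/2)! · 2^{(k−ℓ)/2} ) ) · (σ_x² − 1)^{(k−ℓ)/2} · (σ_{xy}/σ_y)^{ℓ}; otherwise (if k < ℓ or k − ℓ is odd) the expectation is 0. -/

import Mathlib

open MeasureTheory ProbabilityTheory Matrix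

/-- The standard Gaussian measure on `ι → ℝ`. -/
noncomputable def stdGaussian (ι : Type*) [Fintype ι] : Measure (ι → ℝ) :=
  Measure.pi fun _ => gaussianReal 0 1

open Classical in
/-- Square root of a positive semidefinite matrix (junk value `0` otherwise). -/
noncomputable def matSqrt {ι : Type*} [Fintype ι] [DecidableEq ι]
    (A : Matrix ι ι ℝ) : Matrix ι ι ℝ :=
  if h : A.PosSemidef then
    h.1.eigenvectorUnitary.1 * diagonal ((↑) ∘ Real.sqrt ∘ h.1.eigenvalues) *
      (star h.1.eigenvectorUnitary : Matrix ι ι ℝ)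
  else 0

/-- The centered Gaussian measure on `ι → ℝ` with covariance `A` (for `A` PSD),
realized as the pushforward of the standard Gaussian under `A ^ (1/2)`. -/
noncomputable def gaussianOf {ι : Type*} [Fintype ι] [DecidableEq ι]
    (A : Matrix ι ι ℝ) : Measure (ι → ℝ) :=
  (stdGaussian ι).map fun x => matSqrt A *ᵥ x

lemma measurable_matMulVec {ι : Type*} [Fintype ι] (M : Matrix ι ι ℝ) :
    Measurable fun x : ι → ℝ => M *ᵥ x := by
  refine measurable_pi_lambda _ fun i => ?_
  simp only [Matrix.mulVec, dotProduct]
  first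
  | fun_prop
  | exact Finset.measurable_sum Finset.univ fun j _ => measurable_const.mul (measurable_pi_apply j)

instance stdGaussian.instIsProbabilityMeasure (ι : Type*) [Fintype ι] :
    IsProbabilityMeasure (stdGaussian ι) := by
  unfold _root_.stdGaussian; infer_instance

instance gaussianOf.instIsProbabilityMeasure {ι : Type*} [Fintype ι] [DecidableEq ι]
    (A : Matrix ι ι ℝ) : IsProbabilityMeasure (gaussianOf A) :=
  Measure.isProbabilityMeasure_map (measurable_matMulVec _).aemeasurable

/-- Loewner order: `A ⪯ B`. -/
def loewnerLE {ι : Type*} [Fintype ι] (A B : Matrix ι ι ℝ) : Prop := (B - A).PosSemidef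

/-- The Euclidean (`ℓ²`) operator norm of a matrix. -/
noncomputable def opNorm {d : ℕ} (M : Matrix (Fin d) (Fin d) ℝ) : ℝ :=
  ‖Matrix.toEuclideanCLM (𝕜 := ℝ) M‖

/-- Euclidean norm of a vector. -/
noncomputable def euclNorm {ι : Type*} [Fintype ι] (v : ι → ℝ) : ℝ :=
  Real.sqrt (v ⬝ᵥ v)

/-- Normalized probabilist's Hermite polynomial function. -/
noncomputable def hermiteFn (k : ℕ) (x : ℝ) : ℝ :=
  (Polynomial.aeval x (Polynomial.hermite k)) / Real.sqrt (Nat.factorial k)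

/-- The uniform distribution on the unit sphere, realized as the pushforward of the
standard Gaussian under normalization. -/
noncomputable def uniformSphere (d : ℕ) : Measure (Fin d → ℝ) :=
  (stdGaussian (Fin d)).map fun x => (euclNorm x)⁻¹ • x

/-!
Write the Gaussian vector as `B z` with `B = A^{1/2}`, `A = !![sx, sxy; sxy, sy]` and `z` standard,
so that `x = a ⬝ᵥ z` and `y / √sy = b ⬝ᵥ z` with `b ⬝ᵥ b = 1`, `a ⬝ᵥ b = sxy / √sy` and
`a ⬝ᵥ a = sx`. Stein's identity `E[z_i p(z)] = E[∂_i p(z)]`, together with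
`He_{n+1} = x He_n - n He_{n-1}` and `He_n' = n He_{n-1}`, turns
`J(k, ℓ) = E[He_k(a ⬝ᵥ z) He_ℓ(b ⬝ᵥ z)]` into the recurrences
`J(k, ℓ + 1) = (a ⬝ᵥ b) k J(k - 1, ℓ)` and `J(k + 1, 0) = (a ⬝ᵥ a - 1) k J(k - 1, 0)`, which are
solved in closed form.
-/

open MvPolynomial Real Nat

lemma integrable_pow_gaussianReal (μ : ℝ) (v : NNReal) (n : ℕ) :
    Integrable (fun x : ℝ => x ^ n) (gaussianReal μ v) :=
  integrable_pow_of_mem_interior_integrableExpSet (X := id) (by simp) n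

lemma hasDerivAt_gaussianPDFReal_zero_one (x : ℝ) :
    HasDerivAt (gaussianPDFReal 0 1) (-x * gaussianPDFReal 0 1 x) x := by
  have hexp : HasDerivAt (fun y : ℝ => -y ^ 2 / 2) (-x) x :=
    ((hasDerivAt_pow 2 x).fun_neg.div_const 2).congr_deriv (by ring)
  simp only [gaussianPDFReal_def, NNReal.coe_one, mul_one, sub_zero]
  exact (hexp.exp.const_mul (√(2 * π))⁻¹).congr_deriv (by ring)

lemma integrable_pow_mul_gaussianPDFReal_zero_one (n : ℕ) :
    Integrable fun x : ℝ => x ^ n * gaussianPDFReal 0 1 x := by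
  have h := (integrable_rpow_mul_exp_neg_mul_sq (b := 1 / 2) (by norm_num) (s := n)
    (neg_one_lt_zero.trans_le n.cast_nonneg)).const_mul (√(2 * π))⁻¹
  refine h.congr (.of_forall fun x => ?_)
  simp only [gaussianPDFReal_def, NNReal.coe_one, mul_one, sub_zero, Real.rpow_natCast]
  rw [show -x ^ 2 / 2 = -(1 / 2) * x ^ 2 by ring]
  ring

-- Integration by parts against the density `φ`, using `φ' = -x φ`; for `n = 0` both sides vanish.
lemma integral_pow_succ_gaussianReal (n : ℕ) :
    ∫ x, x ^ (n + 1) ∂gaussianReal 0 1 = n * ∫ x, x ^ (n - 1) ∂gaussianReal 0 1 := by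
  simp only [integral_gaussianReal_eq_integral_smul one_ne_zero, smul_eq_mul]
  have hderiv (x : ℝ) : HasDerivAt (fun x => x ^ n * gaussianPDFReal 0 1 x)
      (n * (x ^ (n - 1) * gaussianPDFReal 0 1 x) - x ^ (n + 1) * gaussianPDFReal 0 1 x) x := by
    refine ((hasDerivAt_pow n x).fun_mul (hasDerivAt_gaussianPDFReal_zero_one x)).congr_deriv ?_
    ring
  have hint (m : ℕ) := integrable_pow_mul_gaussianPDFReal_zero_one m
  have h := integral_eq_zero_of_hasDerivAt_of_integrable hderiv
    (((hint _).const_mul _).sub (hint _)) (hint n)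
  rw [integral_sub ((hint _).const_mul _) (hint _), integral_const_mul, sub_eq_zero] at h
  simp only [mul_comm (gaussianPDFReal 0 1 _)]
  exact h.symm

section StdGaussian

variable {ι : Type*} [Fintype ι]

lemma eval_monomial_eq_mul_prod (z : ι → ℝ) (d : ι →₀ ℕ) (c : ℝ) :
    eval z (monomial d c) = c * ∏ i, z i ^ d i := by
  rw [eval_monomial, Finsupp.prod_fintype _ _ fun _ => pow_zero _]

lemma integrable_eval_stdGaussian (p : MvPolynomial ι ℝ) :
    Integrable (fun z => eval z p) (stdGaussian ι) := by
  induction p using MvPolynomial.induction_on' with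
  | monomial d c =>
    simp only [eval_monomial_eq_mul_prod]
    exact (Integrable.fintype_prod fun i => integrable_pow_gaussianReal 0 1 (d i)).const_mul c
  | add p q hp hq => simp only [map_add]; exact hp.add hq

variable (ι) in
noncomputable def gaussianExpectation : MvPolynomial ι ℝ →ₗ[ℝ] ℝ where
  toFun p := ∫ z, eval z p ∂stdGaussian ι
  map_add' p q := by
    simp only [map_add]
    exact integral_add (integrable_eval_stdGaussian p) (integrable_eval_stdGaussian q)
  map_smul' c p := by
    simp only [smul_eval, RingHom.id_apply, smul_eq_mul]
    exact integral_const_mul c _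

lemma gaussianExpectation_apply (p : MvPolynomial ι ℝ) :
    gaussianExpectation ι p = ∫ z, eval z p ∂stdGaussian ι := rfl

lemma gaussianExpectation_monomial (d : ι →₀ ℕ) (c : ℝ) :
    gaussianExpectation ι (monomial d c) = c * ∏ i, ∫ x, x ^ d i ∂gaussianReal 0 1 := by
  simp only [gaussianExpectation_apply, eval_monomial_eq_mul_prod, integral_const_mul]
  exact congrArg _ (integral_fintype_prod_eq_prod fun i (x : ℝ) => x ^ d i)

lemma gaussianExpectation_one : gaussianExpectation ι 1 = 1 := by
  simp [gaussianExpectation_apply]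

/-- Stein's identity. -/
theorem gaussianExpectation_X_mul [DecidableEq ι] (i : ι) (p : MvPolynomial ι ℝ) :
    gaussianExpectation ι (X i * p) = gaussianExpectation ι (pderiv i p) := by
  induction p using MvPolynomial.induction_on' with
  | monomial d c =>
    have hX : X i * monomial d c = monomial (d + Finsupp.single i 1) c := by
      rw [X, monomial_mul, one_mul, add_comm]
    have hprod_compl (f : ℕ → ℕ → ℕ) (hf : ∀ n, f n 0 = n) :
        ∏ j ∈ ({i}ᶜ : Finset ι), ∫ x, x ^ f (d j) (Finsupp.single i 1 j) ∂gaussianReal 0 1 =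
          ∏ j ∈ ({i}ᶜ : Finset ι), ∫ x, x ^ d j ∂gaussianReal 0 1 :=
      Finset.prod_congr rfl fun j hj => by
        rw [Finsupp.single_eq_of_ne (by simpa using hj), hf]
    rw [hX, pderiv_monomial, gaussianExpectation_monomial, gaussianExpectation_monomial,
      Fintype.prod_eq_mul_prod_compl i, Fintype.prod_eq_mul_prod_compl i]
    simp only [Finsupp.coe_add, Finsupp.coe_tsub, Pi.add_apply, Pi.sub_apply]
    rw [hprod_compl (· + ·) Nat.add_zero, hprod_compl (· - ·) Nat.sub_zero,
      Finsupp.single_eq_same, integral_pow_succ_gaussianReal]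
    ring
  | add p q hp hq => simp only [mul_add, map_add, hp, hq]

end StdGaussian

namespace Polynomial

theorem derivative_hermite : ∀ n : ℕ, derivative (hermite n) = n • hermite (n - 1)
  | 0 => by simp [hermite_zero]
  | n + 1 => by
    rw [hermite_succ, derivative_sub, derivative_mul, derivative_X, one_mul, derivative_hermite n,
      map_nsmul, add_sub_assoc, mul_smul_comm, ← smul_sub]
    rcases n with _ | n
    · simp
    · rw [Nat.add_sub_cancel, ← hermite_succ, Nat.add_sub_cancel, succ_nsmul' _ (n + 1)]

theorem hermite_succ' (n : ℕ) : hermite (n + 1) = X * hermite n - n • hermite (n - 1) := by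
  rw [hermite_succ, derivative_hermite]

end Polynomial

theorem MvPolynomial.pderiv_aeval {σ R : Type*} [CommRing R] (i : σ) (s : MvPolynomial σ R)
    (P : Polynomial ℤ) :
    pderiv i (Polynomial.aeval s P) = Polynomial.aeval s (Polynomial.derivative P) * pderiv i s :=
  ((pderiv i).restrictScalars ℤ).map_aeval P s

section HermiteCorrelation

variable {ι : Type*} [Fintype ι]

noncomputable def linearForm (v : ι → ℝ) : MvPolynomial ι ℝ := ∑ i, C (v i) * X i

noncomputable def hermiteOfLinear (n : ℕ) (v : ι → ℝ) : MvPolynomial ι ℝ :=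
  Polynomial.aeval (linearForm v) (Polynomial.hermite n)

lemma eval_linearForm (z v : ι → ℝ) : eval z (linearForm v) = v ⬝ᵥ z := by
  simp [linearForm, dotProduct]

lemma pderiv_linearForm [DecidableEq ι] (i : ι) (v : ι → ℝ) :
    pderiv i (linearForm v) = C (v i) := by
  simp [linearForm, pderiv_X, Pi.single_apply]

lemma eval_hermiteOfLinear (z : ι → ℝ) (n : ℕ) (v : ι → ℝ) :
    eval z (hermiteOfLinear n v) = Polynomial.aeval (v ⬝ᵥ z) (Polynomial.hermite n) := by
  rw [hermiteOfLinear, ← eval_linearForm, ← coe_aeval_eq_eval]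
  exact (Polynomial.aeval_algHom_apply
    ((aeval z : MvPolynomial ι ℝ →ₐ[ℝ] ℝ).restrictScalars ℤ) _ _).symm

lemma hermiteOfLinear_zero (v : ι → ℝ) : hermiteOfLinear 0 v = 1 := by
  simp [hermiteOfLinear, Polynomial.hermite_zero]

lemma hermiteOfLinear_succ (n : ℕ) (v : ι → ℝ) :
    hermiteOfLinear (n + 1) v =
      linearForm v * hermiteOfLinear n v - n * hermiteOfLinear (n - 1) v := by
  rw [hermiteOfLinear, Polynomial.hermite_succ']
  simp [hermiteOfLinear]

lemma pderiv_hermiteOfLinear [DecidableEq ι] (i : ι) (n : ℕ) (v : ι → ℝ) :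
    pderiv i (hermiteOfLinear n v) = C (n * v i) * hermiteOfLinear (n - 1) v := by
  rw [hermiteOfLinear, pderiv_aeval, Polynomial.derivative_hermite, pderiv_linearForm]
  simp only [nsmul_eq_mul, map_mul, map_natCast, hermiteOfLinear]
  ring

variable (ι) in
noncomputable def hermiteCorrelation (a b : ι → ℝ) (k ℓ : ℕ) : ℝ :=
  gaussianExpectation ι (hermiteOfLinear k a * hermiteOfLinear ℓ b)

lemma gaussianExpectation_linearForm_mul [DecidableEq ι] (c a b : ι → ℝ) (k ℓ : ℕ) :
    gaussianExpectation ι (linearForm c * (hermiteOfLinear k a * hermiteOfLinear ℓ b)) =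
      (c ⬝ᵥ a) * k * hermiteCorrelation ι a b (k - 1) ℓ +
        (c ⬝ᵥ b) * ℓ * hermiteCorrelation ι a b k (ℓ - 1) := by
  simp only [linearForm, Finset.sum_mul, mul_assoc, C_mul', smul_mul_assoc, map_sum, map_smul,
    gaussianExpectation_X_mul, pderiv_mul, pderiv_hermiteOfLinear, map_add, mul_smul_comm,
    hermiteCorrelation, dotProduct, Finset.sum_mul, ← Finset.sum_add_distrib, smul_eq_mul]
  refine Finset.sum_congr rfl fun i _ => ?_
  ring

lemma hermiteCorrelation_succ_right [DecidableEq ι] (a b : ι → ℝ) (k ℓ : ℕ) :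
    hermiteCorrelation ι a b k (ℓ + 1) =
      (a ⬝ᵥ b) * k * hermiteCorrelation ι a b (k - 1) ℓ +
        (b ⬝ᵥ b - 1) * ℓ * hermiteCorrelation ι a b k (ℓ - 1) := by
  rw [hermiteCorrelation, hermiteOfLinear_succ, mul_sub, mul_left_comm, map_sub,
    gaussianExpectation_linearForm_mul, mul_left_comm _ (ℓ : MvPolynomial ι ℝ), ← nsmul_eq_mul,
    map_nsmul, nsmul_eq_mul, dotProduct_comm b a, ← hermiteCorrelation]
  ring

lemma hermiteCorrelation_comm (a b : ι → ℝ) (k ℓ : ℕ) :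
    hermiteCorrelation ι a b k ℓ = hermiteCorrelation ι b a ℓ k := by
  rw [hermiteCorrelation, mul_comm, hermiteCorrelation]

lemma hermiteCorrelation_zero_zero (a b : ι → ℝ) : hermiteCorrelation ι a b 0 0 = 1 := by
  rw [hermiteCorrelation, hermiteOfLinear_zero, hermiteOfLinear_zero, one_mul,
    gaussianExpectation_one]

lemma hermiteCorrelation_succ_zero [DecidableEq ι] (a b : ι → ℝ) (k : ℕ) :
    hermiteCorrelation ι a b (k + 1) 0 =
      (a ⬝ᵥ a - 1) * k * hermiteCorrelation ι a b (k - 1) 0 := by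
  rw [hermiteCorrelation_comm, hermiteCorrelation_succ_right,
    hermiteCorrelation_comm b a 0 (k - 1)]
  simp

lemma hermiteCorrelation_two_mul_zero [DecidableEq ι] (a b : ι → ℝ) (m : ℕ) :
    hermiteCorrelation ι a b (2 * m) 0 =
      (a ⬝ᵥ a - 1) ^ m * ((2 * m)! / (m ! * 2 ^ m)) := by
  induction m with
  | zero => simp [hermiteCorrelation_zero_zero]
  | succ m ih =>
    rw [show 2 * (m + 1) = 2 * m + 1 + 1 by ring, hermiteCorrelation_succ_zero,
      Nat.add_sub_cancel, ih, Nat.factorial_succ, Nat.factorial_succ, Nat.factorial_succ]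
    push_cast
    field_simp
    ring

lemma hermiteCorrelation_two_mul_add_one_zero [DecidableEq ι] (a b : ι → ℝ) (m : ℕ) :
    hermiteCorrelation ι a b (2 * m + 1) 0 = 0 := by
  induction m with
  | zero => simp [hermiteCorrelation_succ_zero]
  | succ m ih =>
    have h := hermiteCorrelation_succ_zero a b (2 * m + 1 + 1)
    rwa [Nat.add_sub_cancel, ih, mul_zero] at h

-- As `b ⬝ᵥ b = 1`, the recurrence in `ℓ` loses its second term.
lemma hermiteCorrelation_eq_descFactorial [DecidableEq ι] {a b : ι → ℝ} (hb : b ⬝ᵥ b = 1)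
    (k ℓ : ℕ) :
    hermiteCorrelation ι a b k ℓ =
      (a ⬝ᵥ b) ^ ℓ * k.descFactorial ℓ * hermiteCorrelation ι a b (k - ℓ) 0 := by
  induction ℓ generalizing k with
  | zero => simp
  | succ ℓ ih =>
    rw [hermiteCorrelation_succ_right, hb, sub_self, zero_mul, zero_mul, add_zero, ih]
    cases k with
    | zero => simp
    | succ k =>
      rw [Nat.succ_descFactorial_succ, Nat.add_sub_cancel, Nat.add_sub_add_right]
      push_cast
      ring

theorem integral_hermite_mul_hermite_stdGaussian {a b : ι → ℝ} (hb : b ⬝ᵥ b = 1) (k ℓ : ℕ) :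
    ∫ z, Polynomial.aeval (a ⬝ᵥ z) (Polynomial.hermite k) *
        Polynomial.aeval (b ⬝ᵥ z) (Polynomial.hermite ℓ) ∂stdGaussian ι =
      if ℓ ≤ k ∧ Even (k - ℓ) then
        (a ⬝ᵥ b) ^ ℓ * (a ⬝ᵥ a - 1) ^ ((k - ℓ) / 2) *
          (k ! / (((k - ℓ) / 2)! * 2 ^ ((k - ℓ) / 2)))
      else 0 := by
  classical
  have hJ : ∫ z, Polynomial.aeval (a ⬝ᵥ z) (Polynomial.hermite k) *
      Polynomial.aeval (b ⬝ᵥ z) (Polynomial.hermite ℓ) ∂stdGaussian ι =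
        hermiteCorrelation ι a b k ℓ := by
    simp only [hermiteCorrelation, gaussianExpectation_apply, eval_mul, eval_hermiteOfLinear]
  rw [hJ, hermiteCorrelation_eq_descFactorial hb]
  split_ifs with h
  · obtain ⟨hle, m, hm⟩ := h
    rw [← Nat.factorial_mul_descFactorial hle, hm, ← two_mul, hermiteCorrelation_two_mul_zero,
      Nat.mul_div_cancel_left m two_pos]
    push_cast
    ring
  · rcases not_and_or.1 h with hlt | hodd
    · simp [Nat.descFactorial_eq_zero_iff_lt.2 (not_le.1 hlt)]
    · obtain ⟨m, hm⟩ := Nat.not_even_iff_odd.1 hodd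
      rw [hm, hermiteCorrelation_two_mul_add_one_zero, mul_zero]

end HermiteCorrelation

lemma matSqrt_mul_transpose_self {ι : Type*} [Fintype ι] [DecidableEq ι] {A : Matrix ι ι ℝ}
    (hA : A.PosSemidef) : matSqrt A * (matSqrt A)ᵀ = A := by
  set U : Matrix ι ι ℝ := hA.1.eigenvectorUnitary.1
  set D : Matrix ι ι ℝ := diagonal ((↑) ∘ Real.sqrt ∘ hA.1.eigenvalues)
  have hB : matSqrt A = U * D * Uᵀ := by
    rw [matSqrt, dif_pos hA, star_eq_conjTranspose, conjTranspose_eq_transpose_of_trivial]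
  have hUU : Uᵀ * U = 1 := by
    rw [← conjTranspose_eq_transpose_of_trivial, ← star_eq_conjTranspose]
    exact Unitary.coe_star_mul_self hA.1.eigenvectorUnitary
  have hDD : D * D = diagonal ((↑) ∘ hA.1.eigenvalues) := by
    simp only [D, diagonal_mul_diagonal]
    congr 1
    funext i
    simp [Real.mul_self_sqrt (hA.eigenvalues_nonneg i)]
  have hS := hA.1.spectral_theorem
  rw [Unitary.conjStarAlgAut_apply, star_eq_conjTranspose,
    conjTranspose_eq_transpose_of_trivial] at hS
  calc matSqrt A * (matSqrt A)ᵀ = U * D * (Uᵀ * U) * D * Uᵀ := by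
        simp only [hB, transpose_mul, transpose_transpose, D, diagonal_transpose, Matrix.mul_assoc]
    _ = A := by rw [hUU, Matrix.mul_one, Matrix.mul_assoc U, hDD]; exact hS.symm

/-- For `(x,y)` centered bivariate Gaussian with covariance
`[[σx², σxy],[σxy, σy²]]`, `σy² > 0`: if `k ≥ ℓ` and `k − ℓ` is even,
`E[h_k(x)·h_ℓ(y/σy)] = √(k!/ℓ!) · (((k−ℓ)/2)!·2^{(k−ℓ)/2})⁻¹ · (σx²−1)^{(k−ℓ)/2} · (σxy/σy)^ℓ`,
and otherwise the expectation vanishes. -/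
theorem statement12 (sx sxy sy : ℝ) (hsy : 0 < sy)
    (hM : (!![sx, sxy; sxy, sy]).PosSemidef) (k ℓ : ℕ) :
    (∫ w, hermiteFn k (w 0) * hermiteFn ℓ (w 1 / Real.sqrt sy)
        ∂(gaussianOf !![sx, sxy; sxy, sy]))
      = if ℓ ≤ k ∧ Even (k - ℓ) then
          Real.sqrt ((k.factorial : ℝ) / (ℓ.factorial : ℝ)) *
            (1 / ((((k - ℓ) / 2).factorial : ℝ) * 2 ^ ((k - ℓ) / 2))) *
            (sx - 1) ^ ((k - ℓ) / 2) * (sxy / Real.sqrt sy) ^ ℓ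
        else 0 := by
  set B := matSqrt !![sx, sxy; sxy, sy]
  have hrows (i j : Fin 2) : B i ⬝ᵥ B j = !![sx, sxy; sxy, sy] i j := by
    rw [← matSqrt_mul_transpose_self hM]; rfl
  set a := B 0
  set b := (√sy)⁻¹ • B 1
  have haa : a ⬝ᵥ a = sx := hrows 0 0
  have hab : a ⬝ᵥ b = sxy / √sy := by
    rw [dotProduct_smul, hrows 0 1, smul_eq_mul]; simp [div_eq_inv_mul]
  have hbb : b ⬝ᵥ b = 1 := by
    rw [dotProduct_smul, smul_dotProduct, hrows 1 1, smul_eq_mul, smul_eq_mul]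
    field_simp
    exact (Real.sq_sqrt hsy.le).symm
  have hcont : Continuous fun w : Fin 2 → ℝ => hermiteFn k (w 0) * hermiteFn ℓ (w 1 / √sy) := by
    unfold hermiteFn; fun_prop
  calc _ = ∫ z, Polynomial.aeval (a ⬝ᵥ z) (Polynomial.hermite k) *
          Polynomial.aeval (b ⬝ᵥ z) (Polynomial.hermite ℓ) / (√(k ! : ℝ) * √(ℓ ! : ℝ))
          ∂stdGaussian (Fin 2) := by
        rw [gaussianOf, integral_map (measurable_matMulVec _).aemeasurable
          hcont.aestronglyMeasurable]
        congr with z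
        simp only [hermiteFn, smul_dotProduct, smul_eq_mul, a, b, mulVec, inv_mul_eq_div]
        ring
    _ = _ := by
        rw [integral_div, integral_hermite_mul_hermite_stdGaussian hbb, haa, hab]
        split_ifs
        · rw [Real.sqrt_div (Nat.cast_nonneg _)]
          field_simp
          rw [Real.sq_sqrt (Nat.cast_nonneg _)]
        · exact zero_div _
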